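/- arXiv:math/0001141 — 4 statements merged into one kernel-verified Lean document; each statement's English description precedes it below -/
import Mathlib

section
/- Let T be a finite abelian group, let H = ℤ × T, let α, β ∈ H, and let γ = m·α + n·β for some integers m, n. Then gcd( card (H ⧸ ⟨α⟩), card (H ⧸ ⟨β⟩) ) divides card (H ⧸ ⟨γ⟩). -/
private lemma card_quot_zmultiples_prod (T : Type*) [AddCommGroup T] [Finite T] (x : ℤ × T) :
    Nat.card ((ℤ × T) ⧸ AddSubgroup.zmultiples x) = x.1.natAbs * Nat.card T := by
  rcases eq_or_ne x.1 0 with h0 | h0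
  · -- the quotient is infinite
    have hfin : IsOfFinAddOrder x := by
      rw [isOfFinAddOrder_iff_nsmul_eq_zero]
      obtain ⟨n, hn, hx2⟩ := isOfFinAddOrder_iff_nsmul_eq_zero.mp
        (isOfFinAddOrder_of_finite x.2)
      exact ⟨n, hn, by rw [Prod.ext_iff]; simp [h0, hx2]⟩
    have hcard : Nat.card (AddSubgroup.zmultiples x) * (AddSubgroup.zmultiples x).index
        = Nat.card (ℤ × T) := AddSubgroup.card_mul_index _
    rw [show Nat.card (ℤ × T) = 0 from Nat.card_eq_zero_of_infinite,
      Nat.card_zmultiples] at hcard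
    have hord : addOrderOf x ≠ 0 := hfin.addOrderOf_pos.ne'
    have hidx : (AddSubgroup.zmultiples x).index = 0 := by
      rcases Nat.mul_eq_zero.mp hcard with h | h
      · exact absurd h hord
      · exact h
    rw [← AddSubgroup.index_eq_card, hidx, h0]
    simp
  · set a := x.1 with ha
    set N := AddSubgroup.zmultiples x with hN
    set M := AddSubgroup.zmultiples a with hM
    have hle : N ≤ M.comap (AddMonoidHom.fst ℤ T) := by
      rintro y ⟨k, rfl⟩
      exact AddSubgroup.mem_comap.mpr ⟨k, rfl⟩
    set f : (ℤ × T) ⧸ N →+ ℤ ⧸ M :=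
      QuotientAddGroup.map N M (AddMonoidHom.fst ℤ T) hle with hf
    have hsurj : Function.Surjective f := by
      intro z
      induction z using QuotientAddGroup.induction_on with
      | H k => exact ⟨QuotientAddGroup.mk (k, 0), rfl⟩
    set g : T →+ (ℤ × T) ⧸ N :=
      (QuotientAddGroup.mk' N).comp (AddMonoidHom.inr ℤ T) with hg
    have hginj : Function.Injective g := by
      rw [injective_iff_map_eq_zero]
      intro t ht
      have : ((0 : ℤ), t) ∈ N := (QuotientAddGroup.eq_zero_iff _).mp ht
      obtain ⟨k, hk⟩ := this
      have hk1 : k * a = 0 := congrArg Prod.fst hk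
      have hk0 : k = 0 := by
        rcases mul_eq_zero.mp hk1 with h | h
        · exact h
        · exact absurd h h0
      have := congrArg Prod.snd hk
      simp only [hk0, zero_zsmul, Prod.snd_zero] at this
      exact this.symm
    have hrange : g.range = f.ker := by
      ext y
      induction y using QuotientAddGroup.induction_on with
      | H p =>
        obtain ⟨k, s⟩ := p
        constructor
        · rintro ⟨t, ht⟩
          rw [AddMonoidHom.mem_ker, ← ht]
          have : f (g t) = QuotientAddGroup.mk ((0 : ℤ)) := rfl
          rw [this, QuotientAddGroup.eq_zero_iff]
          exact zero_mem M
        · intro hy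
          rw [AddMonoidHom.mem_ker] at hy
          have hy' : (QuotientAddGroup.mk k : ℤ ⧸ M) = 0 := hy
          have hkM : k ∈ M := (QuotientAddGroup.eq_zero_iff _).mp hy'
          obtain ⟨c, hc⟩ := hkM
          refine ⟨s - c • x.2, ?_⟩
          have key : ((0 : ℤ), s - c • x.2) - (k, s) ∈ N := by
            refine ⟨-c, ?_⟩
            rw [Prod.ext_iff]
            constructor
            · simp [← hc, mul_comm]; exact Or.inl rfl
            · simp
          have := (QuotientAddGroup.eq (s := N) (a := (k, s)) (b := (0, s - c • x.2))).mpr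
            (by simpa [neg_add_eq_sub] using key)
          exact this.symm
    have hkercard : Nat.card f.ker = Nat.card T := by
      rw [← hrange]
      calc Nat.card g.range = Nat.card (Set.range ⇑g) := rfl
        _ = Nat.card T := Nat.card_range_of_injective hginj
    have hq : Nat.card ((ℤ × T) ⧸ N)
        = Nat.card (((ℤ × T) ⧸ N) ⧸ f.ker) * Nat.card f.ker :=
      AddSubgroup.card_eq_card_quotient_mul_card_addSubgroup _
    have hquot : Nat.card (((ℤ × T) ⧸ N) ⧸ f.ker) = Nat.card (ℤ ⧸ M) :=
      Nat.card_congr (QuotientAddGroup.quotientKerEquivOfSurjective f hsurj).toEquiv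
    have hZ : Nat.card (ℤ ⧸ M) = a.natAbs := by
      rw [← AddSubgroup.index_eq_card, hM, Int.index_zmultiples]
    rw [hq, hquot, hZ, hkercard]

/-- The key algebraic step in the proof of Theorem 2: for `H = ℤ × T` with `T` a
finite abelian group, `α, β ∈ H`, and `γ = m•α + n•β`,
`gcd(card (H ⧸ ⟨α⟩), card (H ⧸ ⟨β⟩))` divides `card (H ⧸ ⟨γ⟩)`. -/
theorem gcd_card_quot_dvd_card_quot_combination (T : Type*) [AddCommGroup T] [Finite T]
    (α β : ℤ × T) (m n : ℤ) (γ : ℤ × T) (hγ : γ = m • α + n • β) :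
    Nat.gcd (Nat.card ((ℤ × T) ⧸ AddSubgroup.zmultiples α))
        (Nat.card ((ℤ × T) ⧸ AddSubgroup.zmultiples β))
      ∣ Nat.card ((ℤ × T) ⧸ AddSubgroup.zmultiples γ) := by
  rw [card_quot_zmultiples_prod, card_quot_zmultiples_prod, card_quot_zmultiples_prod,
    Nat.gcd_mul_right]
  refine mul_dvd_mul_right ?_ _
  have hγ1 : γ.1 = m * α.1 + n * β.1 := by rw [hγ]; simp
  have hdvd : ((Nat.gcd α.1.natAbs β.1.natAbs : ℕ) : ℤ) ∣ γ.1 := by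
    rw [hγ1]
    exact dvd_add (Dvd.dvd.mul_left (Int.gcd_dvd_left α.1 β.1) m)
      (Dvd.dvd.mul_left (Int.gcd_dvd_right α.1 β.1) n)
  exact Int.natCast_dvd_natCast.mp (Int.dvd_natAbs.mpr hdvd)
end

section
/- Let T be a finite abelian group, let H = ℤ × T, let α, β, γ ∈ H with γ = m·α + n·β for some integers m, n, and let G be an abelian group such that there exists an injective group homomorphism from H ⧸ ⟨γ⟩ into G. Then gcd( card (H ⧸ ⟨α⟩), card (H ⧸ ⟨β⟩) ) divides card G. -/
/-!
Projecting `ℤ × T` onto `ℤ` gives `card ((ℤ × T) ⧸ ⟨x⟩) = |x.1| * card T`; when `x.1 = 0` or `T`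
is infinite both sides are `0`. As `γ.1 = m * α.1 + n * β.1`, the gcd of `|α.1| * card T` and
`|β.1| * card T` divides `|γ.1| * card T = card ((ℤ × T) ⧸ ⟨γ⟩)`, which divides `card G` because
the quotient embeds in `G`.
-/

open AddSubgroup

namespace AddSubgroup

variable {G G' : Type*} [AddGroup G] [AddGroup G']

theorem index_eq_index_map_mul_relIndex_ker (K : AddSubgroup G) [K.Normal] {f : G →+ G'}
    (hf : Function.Surjective f) : K.index = (K.map f).index * K.relIndex f.ker := by
  rw [← relIndex_mul_index (le_sup_left : K ≤ K ⊔ f.ker), relIndex_sup_left, index_map,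
    f.range_eq_top_of_surjective hf, index_top, mul_one, mul_comm]

theorem relIndex_eq_card_of_disjoint {K L : AddSubgroup G} (h : Disjoint K L) :
    K.relIndex L = Nat.card L := by
  rw [← inf_relIndex_right, h.eq_bot, relIndex_bot_left]

theorem disjoint_zmultiples_ker_fst {A B : Type*} [AddCommGroup A] [AddGroup B]
    [NoZeroSMulDivisors ℤ A] {x : A × B} (hx : x.1 ≠ 0) :
    Disjoint (zmultiples x) (AddMonoidHom.fst A B).ker := by
  rw [disjoint_def]
  rintro _ ⟨k, rfl⟩ hk
  have hk₁ : k • x.1 = 0 := hk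
  obtain rfl : k = 0 := (smul_eq_zero.mp hk₁).resolve_right hx
  exact zero_smul ℤ x

end AddSubgroup

theorem AddMonoidHom.card_ker_fst (A B : Type*) [AddGroup A] [AddGroup B] :
    Nat.card (AddMonoidHom.fst A B).ker = Nat.card B := by
  rw [AddMonoidHom.ker_fst, Nat.card_congr (prodEquiv _ _).toEquiv, Nat.card_prod]
  simp

theorem card_quotient_zmultiples_int_prod (T : Type*) [AddCommGroup T] (x : ℤ × T) :
    Nat.card ((ℤ × T) ⧸ zmultiples x) = x.1.natAbs * Nat.card T := by
  rw [← index,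
    index_eq_index_map_mul_relIndex_ker _ (f := AddMonoidHom.fst ℤ T) Prod.fst_surjective,
    AddMonoidHom.map_zmultiples, Int.index_zmultiples]
  rcases eq_or_ne x.1 0 with hx | hx
  · simp [hx]
  · rw [relIndex_eq_card_of_disjoint (disjoint_zmultiples_ker_fst hx), AddMonoidHom.card_ker_fst]
    rfl

theorem Int.gcd_dvd_natAbs_mul_add_mul (a b m n : ℤ) : Int.gcd a b ∣ (m * a + n * b).natAbs := by
  rw [← Int.natCast_dvd]
  exact dvd_add ((Int.gcd_dvd_left a b).mul_left m) ((Int.gcd_dvd_right a b).mul_left n)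

theorem gcd_card_quot_dvd_card_of_injective_general (T : Type*) [AddCommGroup T]
    (α β γ : ℤ × T) (m n : ℤ) (hγ : γ = m • α + n • β)
    (G : Type*) [AddCommGroup G]
    (f : ((ℤ × T) ⧸ AddSubgroup.zmultiples γ) →+ G) (hf : Function.Injective f) :
    Nat.gcd (Nat.card ((ℤ × T) ⧸ AddSubgroup.zmultiples α))
        (Nat.card ((ℤ × T) ⧸ AddSubgroup.zmultiples β))
      ∣ Nat.card G := by
  have hγ₁ : γ.1 = m * α.1 + n * β.1 := by simp [hγ]
  rw [card_quotient_zmultiples_int_prod, card_quotient_zmultiples_int_prod, Nat.gcd_mul_right]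
  calc Int.gcd α.1 β.1 * Nat.card T
      ∣ γ.1.natAbs * Nat.card T :=
        Nat.mul_dvd_mul_right (hγ₁ ▸ Int.gcd_dvd_natAbs_mul_add_mul ..) _
    _ = Nat.card ((ℤ × T) ⧸ zmultiples γ) := (card_quotient_zmultiples_int_prod T γ).symm
    _ ∣ Nat.card G := card_dvd_of_injective f hf

/-- The algebraic core of Theorem 2: for `H = ℤ × T` with `T` a finite abelian group,
`α, β ∈ H`, `γ = m•α + n•β`, and an abelian group `G` admitting an injective
homomorphism `H ⧸ ⟨γ⟩ → G`, the gcd `gcd(card (H ⧸ ⟨α⟩), card (H ⧸ ⟨β⟩))`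
divides `card G`. -/
theorem gcd_card_quot_dvd_card_of_injective (T : Type*) [AddCommGroup T] [Finite T]
    (α β γ : ℤ × T) (m n : ℤ) (hγ : γ = m • α + n • β)
    (G : Type*) [AddCommGroup G]
    (f : ((ℤ × T) ⧸ AddSubgroup.zmultiples γ) →+ G) (hf : Function.Injective f) :
    Nat.gcd (Nat.card ((ℤ × T) ⧸ AddSubgroup.zmultiples α))
        (Nat.card ((ℤ × T) ⧸ AddSubgroup.zmultiples β))
      ∣ Nat.card G :=
  gcd_card_quot_dvd_card_of_injective_general T α β γ m n hγ G f hf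
end

section
/- Let T be a finite abelian group and H = ℤ × T. If α, β, α′, β′ ∈ H are such that the subgroup of H generated by {α, β} equals the subgroup generated by {α′, β′}, then gcd( card (H ⧸ ⟨α⟩), card (H ⧸ ⟨β⟩) ) = gcd( card (H ⧸ ⟨α′⟩), card (H ⧸ ⟨β′⟩) ). -/
/-!
Projecting `ℤ × T` onto `ℤ` with kernel `0 × T` gives
`|(ℤ × T) ⧸ ⟨(n, t)⟩| = |n| · |T|` (with `0` standing for an infinite cardinality on both sides).
Hence the gcd in question is `gcd(|a|, |b|) · |T|`, where `a` and `b` are the `ℤ`-components of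
`α` and `β`, and `gcd(a, b)` is the index in `ℤ` of the image of `⟨α, β⟩`.
-/

open AddSubgroup

theorem AddSubgroup.index_eq_relIndex_ker_mul_index_map {G G' : Type*} [AddGroup G] [AddGroup G']
    (H : AddSubgroup G) [H.Normal] {f : G →+ G'} (hf : Function.Surjective f) :
    H.index = H.relIndex f.ker * (H.map f).index := by
  rw [← (H.map f).index_comap_of_surjective hf, comap_map_eq, ← relIndex_sup_left,
    relIndex_mul_index le_sup_left]

section IntProd

variable {T : Type*} [AddCommGroup T]

theorem zmultiples_inf_ker_fst_eq_bot {x : ℤ × T} (hx : x.1 ≠ 0) :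
    zmultiples x ⊓ (AddMonoidHom.fst ℤ T).ker = ⊥ := by
  refine eq_bot_iff.2 fun y ⟨⟨k, hk⟩, hy⟩ => ?_
  subst hk
  have hk : k = 0 := by simpa [hx] using (AddMonoidHom.mem_ker.1 hy)
  simp [hk]

theorem relIndex_zmultiples_ker_fst {x : ℤ × T} (hx : x.1 ≠ 0) :
    (zmultiples x).relIndex (AddMonoidHom.fst ℤ T).ker = Nat.card T := by
  rw [← inf_relIndex_right, zmultiples_inf_ker_fst_eq_bot hx, relIndex_bot_left,
    AddMonoidHom.ker_fst, Nat.card_congr (prodEquiv _ _).toEquiv, Nat.card_prod, card_bot,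
    card_top, one_mul]

theorem index_zmultiples_int_prod (x : ℤ × T) :
    (zmultiples x).index = x.1.natAbs * Nat.card T := by
  rw [index_eq_relIndex_ker_mul_index_map (f := AddMonoidHom.fst ℤ T) _ Prod.fst_surjective,
    AddMonoidHom.map_zmultiples, Int.index_zmultiples, mul_comm]
  rcases eq_or_ne x.1 0 with hx | hx
  · simp [hx]
  · rw [AddMonoidHom.coe_fst, relIndex_zmultiples_ker_fst hx]

theorem Int.gcd_eq_index_closure_pair (a b : ℤ) :
    a.gcd b = (AddSubgroup.closure {a, b}).index := by
  rw [Int.closure_eq_zmultiples, Int.index_zmultiples, Int.natAbs_natCast]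

theorem gcd_index_zmultiples_int_prod (a b : ℤ × T) :
    (zmultiples a).index.gcd (zmultiples b).index
      = ((AddSubgroup.closure {a, b}).map (AddMonoidHom.fst ℤ T)).index * Nat.card T := by
  rw [index_zmultiples_int_prod, index_zmultiples_int_prod, Nat.gcd_mul_right,
    AddMonoidHom.map_closure, Set.image_pair, ← Int.gcd_eq_index_closure_pair, Int.gcd_eq_natAbs,
    AddMonoidHom.coe_fst]

end IntProd

theorem gcd_card_quot_eq_of_closure_eq_general (T : Type*) [AddCommGroup T]
    (α β α' β' : ℤ × T)
    (h : AddSubgroup.closure ({α, β} : Set (ℤ × T))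
        = AddSubgroup.closure ({α', β'} : Set (ℤ × T))) :
    Nat.gcd (Nat.card ((ℤ × T) ⧸ AddSubgroup.zmultiples α))
        (Nat.card ((ℤ × T) ⧸ AddSubgroup.zmultiples β))
      = Nat.gcd (Nat.card ((ℤ × T) ⧸ AddSubgroup.zmultiples α'))
          (Nat.card ((ℤ × T) ⧸ AddSubgroup.zmultiples β')) := by
  rw [← index, ← index, ← index, ← index, gcd_index_zmultiples_int_prod,
    gcd_index_zmultiples_int_prod, h]

/-- The Remark after Theorem 2: for `H = ℤ × T` with `T` a finite abelian group,
if the pairs `(α, β)` and `(α', β')` generate the same subgroup of `H`, then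
`gcd(card (H ⧸ ⟨α⟩), card (H ⧸ ⟨β⟩)) = gcd(card (H ⧸ ⟨α'⟩), card (H ⧸ ⟨β'⟩))`. -/
theorem gcd_card_quot_eq_of_closure_eq (T : Type*) [AddCommGroup T] [Finite T]
    (α β α' β' : ℤ × T)
    (h : AddSubgroup.closure ({α, β} : Set (ℤ × T))
        = AddSubgroup.closure ({α', β'} : Set (ℤ × T))) :
    Nat.gcd (Nat.card ((ℤ × T) ⧸ AddSubgroup.zmultiples α))
        (Nat.card ((ℤ × T) ⧸ AddSubgroup.zmultiples β))
      = Nat.gcd (Nat.card ((ℤ × T) ⧸ AddSubgroup.zmultiples α'))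
          (Nat.card ((ℤ × T) ⧸ AddSubgroup.zmultiples β')) :=
  gcd_card_quot_eq_of_closure_eq_general T α β α' β' h
end

section
/- Let Q be the quotient of ℤ × ℤ by the subgroup generated by (9, 3), let A be the quotient of ℤ × ℤ by the subgroup generated by (9, 3) and (3, 0), and let B be the quotient of ℤ × ℤ by the subgroup generated by (9, 3) and (0, 1). Then gcd( card A, card B ) = 9, while the torsion subgroup of Q has cardinality 3; in particular gcd( card A, card B ) ≠ card of the torsion subgroup of Q. -/
namespace GcdCardRemark

noncomputable def fA : (ℤ × ℤ) →+ (ZMod 3 × ZMod 3) :=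
  (Int.castAddHom (ZMod 3)).prodMap (Int.castAddHom (ZMod 3))

lemma fA_ker : fA.ker = AddSubgroup.closure ({((9:ℤ),(3:ℤ)), ((3:ℤ),(0:ℤ))} : Set (ℤ × ℤ)) := by
  apply le_antisymm
  · rintro ⟨a, b⟩ h
    have h1 : ((a : ZMod 3), (b : ZMod 3)) = 0 := h
    have ha : (a : ZMod 3) = 0 := congrArg Prod.fst h1
    have hb : (b : ZMod 3) = 0 := congrArg Prod.snd h1
    rw [ZMod.intCast_zmod_eq_zero_iff_dvd] at ha hb
    have ha' : (3:ℤ) ∣ a := by exact_mod_cast ha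
    have hb' : (3:ℤ) ∣ b := by exact_mod_cast hb
    obtain ⟨m, rfl⟩ := ha'
    obtain ⟨n, rfl⟩ := hb'
    have h30 : ((3:ℤ),(0:ℤ)) ∈ AddSubgroup.closure ({((9:ℤ),(3:ℤ)), ((3:ℤ),(0:ℤ))} : Set (ℤ × ℤ)) :=
      AddSubgroup.subset_closure (by simp)
    have h93 : ((9:ℤ),(3:ℤ)) ∈ AddSubgroup.closure ({((9:ℤ),(3:ℤ)), ((3:ℤ),(0:ℤ))} : Set (ℤ × ℤ)) :=
      AddSubgroup.subset_closure (by simp)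
    have h03 : ((0:ℤ),(3:ℤ)) ∈ AddSubgroup.closure ({((9:ℤ),(3:ℤ)), ((3:ℤ),(0:ℤ))} : Set (ℤ × ℤ)) := by
      have h := AddSubgroup.sub_mem _ h93 (AddSubgroup.zsmul_mem _ h30 3)
      have e : ((9:ℤ),(3:ℤ)) - (3:ℤ) • ((3:ℤ),(0:ℤ)) = ((0:ℤ),(3:ℤ)) := by
        simp [Prod.ext_iff]
      rwa [e] at h
    have : ((3*m : ℤ), (3*n : ℤ)) = m • ((3:ℤ),(0:ℤ)) + n • ((0:ℤ),(3:ℤ)) := by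
      ext <;> simp <;> ring
    rw [this]
    exact AddSubgroup.add_mem _ (AddSubgroup.zsmul_mem _ h30 m) (AddSubgroup.zsmul_mem _ h03 n)
  · rw [AddSubgroup.closure_le]
    rintro x (rfl | rfl) <;> · show fA _ = 0; simp [fA]; decide

lemma fA_surj : Function.Surjective fA := by
  rintro ⟨x, y⟩
  exact ⟨((x.val : ℤ), (y.val : ℤ)), by simp [fA, ZMod.intCast_cast, ZMod.natCast_val]⟩

lemma cardA : Nat.card ((ℤ × ℤ) ⧸ AddSubgroup.closure
    ({((9 : ℤ), (3 : ℤ)), ((3 : ℤ), (0 : ℤ))} : Set (ℤ × ℤ))) = 9 := by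
  rw [← fA_ker]
  rw [Nat.card_congr (QuotientAddGroup.quotientKerEquivOfSurjective fA fA_surj).toEquiv]
  simp [Nat.card_prod, Nat.card_zmod]

noncomputable def fB : (ℤ × ℤ) →+ ZMod 9 :=
  (Int.castAddHom (ZMod 9)).comp (AddMonoidHom.fst ℤ ℤ)

lemma fB_ker : fB.ker = AddSubgroup.closure ({((9:ℤ),(3:ℤ)), ((0:ℤ),(1:ℤ))} : Set (ℤ × ℤ)) := by
  apply le_antisymm
  · rintro ⟨a, b⟩ h
    have ha : (a : ZMod 9) = 0 := h
    rw [ZMod.intCast_zmod_eq_zero_iff_dvd] at ha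
    have ha' : (9:ℤ) ∣ a := by exact_mod_cast ha
    obtain ⟨m, rfl⟩ := ha'
    have h01 : ((0:ℤ),(1:ℤ)) ∈ AddSubgroup.closure ({((9:ℤ),(3:ℤ)), ((0:ℤ),(1:ℤ))} : Set (ℤ × ℤ)) :=
      AddSubgroup.subset_closure (by simp)
    have h93 : ((9:ℤ),(3:ℤ)) ∈ AddSubgroup.closure ({((9:ℤ),(3:ℤ)), ((0:ℤ),(1:ℤ))} : Set (ℤ × ℤ)) :=
      AddSubgroup.subset_closure (by simp)
    have h90 : ((9:ℤ),(0:ℤ)) ∈ AddSubgroup.closure ({((9:ℤ),(3:ℤ)), ((0:ℤ),(1:ℤ))} : Set (ℤ × ℤ)) := by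
      have h := AddSubgroup.sub_mem _ h93 (AddSubgroup.zsmul_mem _ h01 3)
      have e : ((9:ℤ),(3:ℤ)) - (3:ℤ) • ((0:ℤ),(1:ℤ)) = ((9:ℤ),(0:ℤ)) := by
        simp [Prod.ext_iff]
      rwa [e] at h
    have : ((9*m : ℤ), b) = m • ((9:ℤ),(0:ℤ)) + b • ((0:ℤ),(1:ℤ)) := by
      ext <;> simp <;> try ring
    rw [this]
    exact AddSubgroup.add_mem _ (AddSubgroup.zsmul_mem _ h90 m) (AddSubgroup.zsmul_mem _ h01 b)
  · rw [AddSubgroup.closure_le]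
    rintro x (rfl | rfl) <;> · show fB _ = 0; simp [fB]; try decide

lemma fB_surj : Function.Surjective fB := by
  intro x
  exact ⟨((x.val : ℤ), 0), by simp [fB, ZMod.intCast_cast, ZMod.natCast_val]⟩

lemma cardB : Nat.card ((ℤ × ℤ) ⧸ AddSubgroup.closure
    ({((9 : ℤ), (3 : ℤ)), ((0 : ℤ), (1 : ℤ))} : Set (ℤ × ℤ))) = 9 := by
  rw [← fB_ker]
  rw [Nat.card_congr (QuotientAddGroup.quotientKerEquivOfSurjective fB fB_surj).toEquiv]
  simp [Nat.card_zmod]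

noncomputable def g : (ℤ × ℤ) →+ (ℤ × ZMod 3) :=
  AddMonoidHom.mk' (fun p => (p.1 - 3 * p.2, (p.2 : ZMod 3)))
    (by intro a b; simp [Prod.ext_iff]; ring)

lemma g_ker : g.ker = AddSubgroup.zmultiples (((9:ℤ),(3:ℤ)) : ℤ × ℤ) := by
  apply le_antisymm
  · rintro ⟨a, b⟩ h
    have h1 : ((a - 3 * b : ℤ), (b : ZMod 3)) = 0 := h
    have ha : a - 3 * b = 0 := congrArg Prod.fst h1
    have hb : (b : ZMod 3) = 0 := congrArg Prod.snd h1
    rw [ZMod.intCast_zmod_eq_zero_iff_dvd] at hb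
    have hb' : (3:ℤ) ∣ b := by exact_mod_cast hb
    obtain ⟨k, rfl⟩ := hb'
    refine AddSubgroup.mem_zmultiples_iff.mpr ⟨k, ?_⟩
    ext <;> simp <;> omega
  · refine AddSubgroup.zmultiples_le_of_mem ?_
    show g _ = 0
    simp [g, Prod.ext_iff]
    decide

lemma g_surj : Function.Surjective g := by
  rintro ⟨n, c⟩
  refine ⟨(n + 3 * (c.val : ℤ), (c.val : ℤ)), ?_⟩
  simp [g, Prod.ext_iff, ZMod.intCast_cast, ZMod.natCast_val]

lemma int_fin_order {a : ℤ} (h : IsOfFinAddOrder a) : a = 0 := by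
  obtain ⟨n, hn, h⟩ := isOfFinAddOrder_iff_nsmul_eq_zero.mp h
  have : (n : ℤ) * a = 0 := by rw [← h]; simp
  rcases mul_eq_zero.mp this with h' | h'
  · omega
  · exact h'

lemma zmod3_smul (c : ZMod 3) : (3:ℕ) • c = 0 := by
  rw [nsmul_eq_mul, ZMod.natCast_self, zero_mul]

lemma torsion_prod : AddCommGroup.torsion (ℤ × ZMod 3)
    = (⊥ : AddSubgroup ℤ).prod (⊤ : AddSubgroup (ZMod 3)) := by
  ext ⟨a, c⟩
  constructor
  · intro h
    have := int_fin_order (IsOfFinAddOrder.fst (x := (a, c)) h)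
    exact ⟨this, trivial⟩
  · rintro ⟨ha, -⟩
    have ha : a = 0 := ha
    subst ha
    exact IsOfFinAddOrder.prod_mk
      (isOfFinAddOrder_iff_nsmul_eq_zero.mpr ⟨1, one_pos, by simp⟩)
      (isOfFinAddOrder_iff_nsmul_eq_zero.mpr ⟨3, by norm_num,
        zmod3_smul c⟩)

lemma card_torsion : Nat.card
    (AddCommGroup.torsion ((ℤ × ℤ) ⧸ AddSubgroup.zmultiples (((9 : ℤ), (3 : ℤ)) : ℤ × ℤ))) = 3 := by
  rw [← g_ker]
  have e : ((ℤ × ℤ) ⧸ g.ker) ≃+ (ℤ × ZMod 3) :=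
    QuotientAddGroup.quotientKerEquivOfSurjective g g_surj
  have hmap : (AddCommGroup.torsion ((ℤ × ℤ) ⧸ g.ker)).map (e : (ℤ × ℤ) ⧸ g.ker →+ ℤ × ZMod 3)
      = AddCommGroup.torsion (ℤ × ZMod 3) := by
    ext x
    constructor
    · rintro ⟨y, hy, rfl⟩
      exact e.toAddMonoidHom.isOfFinAddOrder hy
    · intro hx
      refine ⟨e.symm x, ?_, by simp⟩
      exact e.symm.toAddMonoidHom.isOfFinAddOrder hx
  have e2 := e.addSubgroupMap (AddCommGroup.torsion ((ℤ × ℤ) ⧸ g.ker))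
  rw [hmap] at e2
  rw [Nat.card_congr e2.toEquiv, torsion_prod,
    Nat.card_congr (AddSubgroup.prodEquiv _ _).toEquiv, Nat.card_prod,
    AddSubgroup.card_bot, AddSubgroup.card_top, Nat.card_zmod]

end GcdCardRemark



/-- The conclusion of the Remark in Section 3: with `Q = (ℤ × ℤ)/⟨(9,3)⟩`,
`A = (ℤ × ℤ)/⟨(9,3),(3,0)⟩`, and `B = (ℤ × ℤ)/⟨(9,3),(0,1)⟩`, we have
`gcd(card A, card B) = 9` while the torsion subgroup of `Q` has cardinality `3`;
in particular the two numbers differ. -/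
theorem gcd_card_ne_card_torsion :
    Nat.gcd
        (Nat.card ((ℤ × ℤ) ⧸ AddSubgroup.closure
          ({((9 : ℤ), (3 : ℤ)), ((3 : ℤ), (0 : ℤ))} : Set (ℤ × ℤ))))
        (Nat.card ((ℤ × ℤ) ⧸ AddSubgroup.closure
          ({((9 : ℤ), (3 : ℤ)), ((0 : ℤ), (1 : ℤ))} : Set (ℤ × ℤ)))) = 9
    ∧ Nat.card
        (AddCommGroup.torsion ((ℤ × ℤ) ⧸ AddSubgroup.zmultiples (((9 : ℤ), (3 : ℤ)) : ℤ × ℤ))) = 3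
    ∧ Nat.gcd
        (Nat.card ((ℤ × ℤ) ⧸ AddSubgroup.closure
          ({((9 : ℤ), (3 : ℤ)), ((3 : ℤ), (0 : ℤ))} : Set (ℤ × ℤ))))
        (Nat.card ((ℤ × ℤ) ⧸ AddSubgroup.closure
          ({((9 : ℤ), (3 : ℤ)), ((0 : ℤ), (1 : ℤ))} : Set (ℤ × ℤ))))
      ≠ Nat.card
        (AddCommGroup.torsion ((ℤ × ℤ) ⧸ AddSubgroup.zmultiples (((9 : ℤ), (3 : ℤ)) : ℤ × ℤ))) := by
  refine ⟨?_, ?_, ?_⟩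
  · rw [GcdCardRemark.cardA, GcdCardRemark.cardB]; rfl
  · exact GcdCardRemark.card_torsion
  · rw [GcdCardRemark.cardA, GcdCardRemark.cardB, GcdCardRemark.card_torsion]
    norm_num
end
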